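/- arXiv:2405.18940 — 8 statements merged into one kernel-verified Lean document; each statement's English description precedes it below -/
import Mathlib

section
/- Let p be a polynomial with real coefficients that has only real zeros. If p' has a real zero ζ of multiplicity at least 2, then p(ζ) = 0. -/
open Polynomial

lemma aux_sum_identity (ζ : ℝ) (s : Multiset ℝ) (hs : ∀ a ∈ s, ζ ≠ a) :
    eval ζ (derivative (derivative ((s.map (fun a => X - C a)).prod))) *
      eval ζ ((s.map (fun a => X - C a)).prod)
      - (eval ζ (derivative ((s.map (fun a => X - C a)).prod)))^2
    = -(eval ζ ((s.map (fun a => X - C a)).prod))^2 *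
        (s.map (fun a => ((ζ - a)⁻¹)^2)).sum := by
  induction s using Multiset.induction_on with
  | empty => simp
  | cons a t ih =>
    have hd : ζ - a ≠ 0 := sub_ne_zero.mpr (hs a (Multiset.mem_cons_self a t))
    have ih' := ih (fun b hb => hs b (Multiset.mem_cons_of_mem hb))
    have hinv : (ζ - a)⁻¹ * (ζ - a) = 1 := inv_mul_cancel₀ hd
    simp only [Multiset.map_cons, Multiset.prod_cons, Multiset.sum_cons,
      derivative_mul, derivative_add, derivative_sub, derivative_X, derivative_C,
      sub_zero, one_mul, eval_add, eval_mul, eval_sub, eval_X, eval_C]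
    linear_combination (ζ - a)^2 * ih' +
      (eval ζ ((t.map (fun a => X - C a)).prod))^2 * ((ζ - a)⁻¹ * (ζ - a) + 1) * hinv

theorem eval_eq_zero_of_derivative_multiple_root (p : Polynomial ℝ)
    (hdeg : 0 < p.natDegree)
    (hreal : ∀ z : ℂ, (Polynomial.aeval z) p = 0 → z.im = 0)
    (ζ : ℝ) (hζ : (Polynomial.X - Polynomial.C ζ)^2 ∣ p.derivative) :
    p.eval ζ = 0 := by
  by_contra hp0
  have hpne : p ≠ 0 := fun h => by simp [h] at hdeg
  -- p splits over ℝ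
  have hsplitsC : Splits (p.map (algebraMap ℝ ℂ)) := IsAlgClosed.splits _
  have hroots_map : (p.map (algebraMap ℝ ℂ)).roots = p.roots.map (algebraMap ℝ ℂ) := by
    ext z
    by_cases hz : z.im = 0
    · obtain ⟨r, rfl⟩ : ∃ r : ℝ, (algebraMap ℝ ℂ) r = z :=
        ⟨z.re, by simpa [Complex.ext_iff] using hz.symm⟩
      rw [Multiset.count_map_eq_count' _ _ (algebraMap ℝ ℂ).injective,
        count_roots, count_roots, eq_rootMultiplicity_map (algebraMap ℝ ℂ).injective]
    · have hz0 : z ∉ (p.map (algebraMap ℝ ℂ)).roots := by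
        intro hmem
        exact hz (hreal z (by
          have := isRoot_of_mem_roots hmem
          simpa [aeval_def, eval_map] using this))
      have hz1 : z ∉ p.roots.map (algebraMap ℝ ℂ) := by
        intro hmem
        obtain ⟨r, _, rfl⟩ := Multiset.mem_map.mp hmem
        simp at hz
      rw [Multiset.count_eq_zero_of_notMem hz0, Multiset.count_eq_zero_of_notMem hz1]
  have hcard : p.roots.card = p.natDegree := by
    have h1 := (splits_iff_card_roots.mp hsplitsC)
    rw [hroots_map, Multiset.card_map] at h1
    rw [h1, natDegree_map]
  have hsplits : Splits p := splits_iff_card_roots.mpr hcard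
  have hfact := hsplits.eq_prod_roots
  set q : ℝ[X] := (p.roots.map (fun a => X - C a)).prod with hq
  have hc : p.leadingCoeff ≠ 0 := leadingCoeff_ne_zero.mpr hpne
  -- derivative relations
  obtain ⟨r, hr⟩ := hζ
  have h1 : eval ζ (derivative p) = 0 := by rw [hr]; simp
  have h2 : eval ζ (derivative (derivative p)) = 0 := by
    rw [hr, derivative_mul]
    simp [derivative_pow]
  have hqroots : ∀ a ∈ p.roots, ζ ≠ a := by
    intro a ha h
    rw [h] at hp0
    exact hp0 (isRoot_of_mem_roots ha)
  -- transfer to q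
  have hpq : p = C p.leadingCoeff * q := hfact
  have hdp : derivative p = C p.leadingCoeff * derivative q := by
    conv_lhs => rw [hpq, derivative_mul, derivative_C, zero_mul, zero_add]
  have hq1 : eval ζ (derivative q) = 0 := by
    rw [hdp, eval_mul, eval_C] at h1
    exact (mul_eq_zero.mp h1).resolve_left hc
  have hq2 : eval ζ (derivative (derivative q)) = 0 := by
    rw [hdp, derivative_mul, derivative_C, zero_mul, zero_add, eval_mul, eval_C] at h2
    exact (mul_eq_zero.mp h2).resolve_left hc
  have hq0 : eval ζ q ≠ 0 := by
    intro h
    apply hp0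
    rw [hpq]; simp [h]
  have key := aux_sum_identity ζ p.roots hqroots
  rw [← hq, hq1, hq2, zero_mul] at key
  have hsum : (p.roots.map (fun a => ((ζ - a)⁻¹)^2)).sum = 0 := by
    have hQ2 : (eval ζ q)^2 ≠ 0 := pow_ne_zero 2 hq0
    have : (eval ζ q)^2 * (p.roots.map (fun a => ((ζ - a)⁻¹)^2)).sum = 0 := by
      linarith [key]
    exact (mul_eq_zero.mp this).resolve_left hQ2
  have hne : p.roots ≠ 0 := by
    intro h
    rw [h] at hcard
    simp at hcard
    omega
  obtain ⟨a, ha⟩ := Multiset.exists_mem_of_ne_zero hne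
  obtain ⟨t, hcons⟩ := Multiset.exists_cons_of_mem ha
  have hda : ζ - a ≠ 0 := sub_ne_zero.mpr (hqroots a ha)
  have hterm : 0 < ((ζ - a)⁻¹)^2 := by positivity
  have hrest : 0 ≤ (t.map (fun a => ((ζ - a)⁻¹)^2)).sum := by
    apply Multiset.sum_nonneg
    intro x hx
    obtain ⟨b, _, rfl⟩ := Multiset.mem_map.mp hx
    positivity
  rw [hcons, Multiset.map_cons, Multiset.sum_cons] at hsum
  linarith
end

section
/- Let b₀, b₁, ..., with b₀=1, be real numbers and suppose that for every n ≥ 2 and for A(z)=(1+z)^{n+1} the Brenke polynomial pₙ generated by A and associated to B has only real zeros, and that b_{n-2}bₙ > 0. Then for all n ≥ 2, b_{n-1}²/(b_{n-2}bₙ) ≥ 1 + 1/(n²−1). -/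
open Polynomial Multiset

lemma esymm_map_hom {R S : Type*} [CommRing R] [CommRing S] (f : R →+* S)
    (T : Multiset R) (k : ℕ) : (T.map f).esymm k = f (T.esymm k) := by
  simp only [Multiset.esymm, Multiset.powersetCard_map, Multiset.map_map, map_multiset_sum,
    Function.comp_def, map_multiset_prod]

lemma esymm_one_eq_sum {R : Type*} [CommRing R] (T : Multiset R) : T.esymm 1 = T.sum := by
  simp [Multiset.esymm, Multiset.powersetCard_one, Multiset.map_map]

lemma esymm_two_cons {R : Type*} [CommRing R] (a : R) (T : Multiset R) :
    (a ::ₘ T).esymm 2 = a * T.sum + T.esymm 2 := by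
  rw [Multiset.esymm, show (2:ℕ) = 1 + 1 from rfl, Multiset.powersetCard_cons,
    Multiset.map_add, Multiset.sum_add, Multiset.map_map]
  rw [add_comm]
  congr 1
  rw [Multiset.powersetCard_one, Multiset.map_map]
  have h : Multiset.map ((Multiset.prod ∘ Multiset.cons a) ∘ singleton) T
      = T.map (fun x => a * x) := Multiset.map_congr rfl (fun x _ => by simp)
  rw [h, Multiset.sum_map_mul_left, Multiset.map_id']

lemma esymm_two_eq {T : Multiset ℝ} :
    T.sum ^ 2 = (T.map (fun x => x ^ 2)).sum + 2 * T.esymm 2 := by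
  induction T using Multiset.induction_on with
  | empty => simp [Multiset.esymm, Multiset.powersetCard_zero_right]
  | cons a T ih =>
      rw [Multiset.sum_cons, Multiset.map_cons, Multiset.sum_cons, esymm_two_cons]
      ring_nf
      ring_nf at ih
      nlinarith [ih]

lemma sq_sum_le (T : Multiset ℝ) :
    T.sum ^ 2 ≤ (Multiset.card T : ℝ) * (T.map (fun x => x ^ 2)).sum := by
  induction T using Multiset.induction_on with
  | empty => simp
  | cons a T ih =>
      rw [Multiset.sum_cons, Multiset.map_cons, Multiset.sum_cons, Multiset.card_cons]
      push_cast
      have hq : (0:ℝ) ≤ (T.map (fun x => x ^ 2)).sum :=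
        Multiset.sum_nonneg (by intro x hx; obtain ⟨y, _, rfl⟩ := Multiset.mem_map.mp hx; positivity)
      have hc : (0:ℝ) ≤ (Multiset.card T : ℝ) := by positivity
      by_cases hT : T = 0
      · simp [hT]
      · have hc1 : (1:ℝ) ≤ (Multiset.card T : ℝ) := by
          have := Multiset.card_pos.mpr hT
          exact_mod_cast this
        nlinarith [sq_nonneg ((Multiset.card T : ℝ) * a - T.sum),
          mul_le_mul_of_nonneg_left ih hc]

set_option maxHeartbeats 1600000 in
theorem logconcavity_bound (b : ℕ → ℝ) (hb : b 0 = 1)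
    (hreal : ∀ n, 2 ≤ n → ∀ z : ℂ,
      (Polynomial.aeval z) (∑ j ∈ Finset.range (n+1),
        Polynomial.C ((Nat.choose (n+1) j : ℝ) * b (n-j)) * Polynomial.X ^ (n-j)) = 0
        → z.im = 0)
    (hpos : ∀ n, 2 ≤ n → 0 < b (n-2) * b n) :
    ∀ n : ℕ, 2 ≤ n → 1 + 1/((n:ℝ)^2 - 1) ≤ (b (n-1))^2 / (b (n-2) * b n) := by
  intro n hn
  have hposn := hpos n hn
  set P : Polynomial ℝ := ∑ j ∈ Finset.range (n+1),
      Polynomial.C ((Nat.choose (n+1) j : ℝ) * b (n-j)) * Polynomial.X ^ (n-j) with hP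
  have hbn : b n ≠ 0 := by
    intro h
    rw [h, mul_zero] at hposn
    exact lt_irrefl 0 hposn
  have hcoeff : ∀ j₀, j₀ ≤ n → P.coeff (n - j₀) = (Nat.choose (n+1) j₀ : ℝ) * b (n - j₀) := by
    intro j₀ hj₀
    rw [hP, Polynomial.finset_sum_coeff]
    rw [Finset.sum_eq_single j₀]
    · rw [Polynomial.coeff_C_mul, Polynomial.coeff_X_pow, if_pos rfl, mul_one]
    · intro j hj hne
      have hj' := Finset.mem_range.mp hj
      simp only [Polynomial.coeff_C_mul, Polynomial.coeff_X_pow]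
      rw [if_neg, mul_zero]
      intro h
      exact hne (by omega)
    · intro h
      exact absurd (Finset.mem_range.mpr (by omega)) h
  have hPn : P.coeff n = b n := by
    have h0 := hcoeff 0 (by omega)
    simpa using h0
  have hdeg_le : P.natDegree ≤ n := by
    rw [hP]
    apply Polynomial.natDegree_sum_le_of_forall_le
    intro j hj
    refine le_trans (Polynomial.natDegree_C_mul_X_pow_le _ _) ?_
    omega
  have hdeg : P.natDegree = n :=
    le_antisymm hdeg_le (Polynomial.le_natDegree_of_ne_zero (by rw [hPn]; exact hbn))
  set Q : Polynomial ℂ := P.map (algebraMap ℝ ℂ) with hQ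
  have hQdeg : Q.natDegree = n := by
    rw [hQ, Polynomial.natDegree_map_eq_of_injective (algebraMap ℝ ℂ).injective, hdeg]
  have hlead : Q.leadingCoeff = (b n : ℂ) := by
    rw [Polynomial.leadingCoeff, hQdeg, hQ, Polynomial.coeff_map, hPn]
    rfl
  have hsplit : Q.Splits := IsAlgClosed.splits Q
  have hcard : Multiset.card Q.roots = n := by
    rw [(Polynomial.splits_iff_card_roots).mp hsplit, hQdeg]
  have hrootsreal : ∀ z ∈ Q.roots, z.im = 0 := by
    intro z hz
    apply hreal n hn z
    rw [← hP, Polynomial.aeval_def, ← Polynomial.eval_map, ← hQ]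
    exact Polynomial.isRoot_of_mem_roots hz
  set T : Multiset ℝ := Q.roots.map Complex.re with hTdef
  have hT : Multiset.map (fun r : ℝ => (r : ℂ)) T = Q.roots := by
    rw [hTdef, Multiset.map_map]
    trans Multiset.map id Q.roots
    · refine Multiset.map_congr rfl (fun z hz => ?_)
      simp only [Function.comp_apply, id_eq]
      exact Complex.ext (Complex.ofReal_re _) (by simp [hrootsreal z hz])
    · exact Multiset.map_id _
  have hTcard : (Multiset.card T : ℝ) = n := by
    rw [hTdef, Multiset.card_map, hcard]
  have hesymm : ∀ k, (Q.roots).esymm k = ((T.esymm k : ℝ) : ℂ) := by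
    intro k
    rw [← hT]
    exact esymm_map_hom Complex.ofRealHom T k
  -- Vieta at n-1
  have hV1 := Polynomial.coeff_eq_esymm_roots_of_splits hsplit
    (show n - 1 ≤ Q.natDegree by rw [hQdeg]; omega)
  rw [hQdeg, show n - (n-1) = 1 by omega, pow_one, hlead, hesymm 1, hQ,
    Polynomial.coeff_map, hcoeff 1 (by omega)] at hV1
  have hV2 := Polynomial.coeff_eq_esymm_roots_of_splits hsplit
    (show n - 2 ≤ Q.natDegree by rw [hQdeg]; omega)
  rw [hQdeg, show n - (n-2) = 2 by omega, neg_one_sq, mul_one, hlead, hesymm 2, hQ,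
    Polynomial.coeff_map, hcoeff 2 (by omega)] at hV2
  have e1 : (Nat.choose (n+1) 1 : ℝ) * b (n-1) = -(b n * T.esymm 1) := by
    apply Complex.ofReal_injective
    simp only [Complex.coe_algebraMap] at hV1
    push_cast at hV1 ⊢
    linear_combination hV1
  have e2 : (Nat.choose (n+1) 2 : ℝ) * b (n-2) = b n * T.esymm 2 := by
    apply Complex.ofReal_injective
    simp only [Complex.coe_algebraMap] at hV2
    push_cast at hV2 ⊢
    linear_combination hV2
  rw [Nat.choose_one_right] at e1
  have hch2 : (Nat.choose (n+1) 2 : ℝ) = ((n:ℝ)+1) * n / 2 := by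
    rw [Nat.cast_choose_two]
    push_cast
    ring
  set s : ℝ := T.sum with hs
  set e : ℝ := T.esymm 2 with he
  rw [esymm_one_eq_sum] at e1
  -- key inequality
  have key : 2 * (n:ℝ) * e ≤ ((n:ℝ) - 1) * s ^ 2 := by
    have h1 := sq_sum_le T
    rw [hTcard] at h1
    have h2 : s ^ 2 = (T.map (fun x => x ^ 2)).sum + 2 * e := esymm_two_eq
    have h3 : (n:ℝ) * s ^ 2 = (n:ℝ) * (T.map (fun x => x ^ 2)).sum + (n:ℝ) * (2 * e) := by
      rw [h2]; ring
    nlinarith [h1, h3]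
  -- arithmetic wrap-up
  have hn2 : (2:ℝ) ≤ (n:ℝ) := by exact_mod_cast hn
  have hd : (0:ℝ) < (n:ℝ)^2 - 1 := by nlinarith
  have hβ : (0:ℝ) < b n ^ 2 := pow_two_pos_of_ne_zero hbn
  have A : ((n:ℝ)+1) * b (n-1) = -(b n * s) := by
    push_cast at e1
    linarith [e1]

  have B : ((n:ℝ)+1) * (n:ℝ) * b (n-2) = 2 * (b n * e) := by
    rw [hch2] at e2
    linarith [e2]
  have hA : (((n:ℝ)+1) * b (n-1))^2 = (b n * s)^2 := by
    rw [A]; ring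
  have hB : ((n:ℝ)+1) * (n:ℝ) * b (n-2) * b n = 2 * e * b n ^ 2 := by
    linear_combination b n * B
  have keyb : 2 * (n:ℝ) * e * b n ^ 2 ≤ ((n:ℝ) - 1) * s ^ 2 * b n ^ 2 :=
    mul_le_mul_of_nonneg_right key (sq_nonneg (b n))
  rw [le_div_iff₀ hposn]
  have l1 : (n:ℝ)^2 * ((n:ℝ)+1) * (b (n-2) * b n) = (n:ℝ) * (2 * e * b n ^ 2) := by
    linear_combination (n:ℝ) * hB
  have l2 : ((n:ℝ)^2-1) * ((n:ℝ)+1) * (b (n-1)^2) = ((n:ℝ)-1) * ((b n * s)^2) := by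
    linear_combination ((n:ℝ)-1) * hA
  have step : (n:ℝ)^2 * ((n:ℝ)+1) * (b (n-2) * b n)
      ≤ ((n:ℝ)^2-1) * ((n:ℝ)+1) * (b (n-1)^2) := by
    rw [l1, l2]
    nlinarith [keyb]
  have h1n : (1 + 1/((n:ℝ)^2 - 1)) = (n:ℝ)^2 / ((n:ℝ)^2 - 1) := by
    field_simp
    ring
  rw [h1n, div_mul_eq_mul_div, div_le_iff₀ hd]
  nlinarith [step, hn2]
end

section
/- Let bₙ be nonzero real numbers for n ≥ n₀ with b₀=1, and suppose there exist 0 < λ < 1 and an increasing sequence (n_k) of integers ≥ max(n₀+2, 2) such that b_{n_k−2}b_{n_k}/b_{n_k−1}² ≤ λ for all k. Then there exists a polynomial A(z) = 1 + a₁z + a₂z² with a₀=1 having no real zeros such that for every k the Brenke polynomial p_{n_k}(x) = x^{n_k−2}(a₂b_{n_k−2} + a₁b_{n_k−1}x + b_{n_k}x²) has only real zeros. -/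
lemma quad_im_zero (A B C : ℝ) (hA : A ≠ 0) (hD : 4*A*C ≤ B^2) (z : ℂ)
    (h : (A:ℂ) * z^2 + (B:ℂ) * z + (C:ℂ) = 0) : z.im = 0 := by
  set x := z.re
  set y := z.im
  have hre : A * (x^2 - y^2) + B * x + C = 0 := by
    have := congrArg Complex.re h
    simp [Complex.add_re, Complex.mul_re, Complex.mul_im, pow_two, x, y] at this ⊢
    linarith [this]
  have him : y * (2*A*x + B) = 0 := by
    have := congrArg Complex.im h
    simp [Complex.add_im, Complex.mul_re, Complex.mul_im, pow_two, x, y] at this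
    ring_nf
    ring_nf at this
    linarith [this]
  by_contra hy
  have h2 : 2*A*x + B = 0 := by
    rcases mul_eq_zero.mp him with h' | h'
    · exact absurd h' hy
    · exact h'
  have hy2 : 0 < y^2 := by positivity
  have hA2 : 0 < A^2 := by positivity
  have hB : B = -(2*A*x) := by linarith
  have key : 4*A*(A*(x^2-y^2)+B*x+C) = 0 := by rw [hre]; ring
  rw [hB] at hD key
  nlinarith [mul_pos hA2 hy2, key, hD]

theorem exists_nonreal_quadratic_in_rrp_partial (b : ℕ → ℝ) (n₀ : ℕ)
    (hb0 : b 0 = 1) (hbne : ∀ n, n₀ ≤ n → b n ≠ 0)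
    (lam : ℝ) (hl0 : 0 < lam) (hl1 : lam < 1)
    (nk : ℕ → ℕ) (hmono : StrictMono nk)
    (hge : ∀ k, max (n₀ + 2) 2 ≤ nk k)
    (hlam : ∀ k, b (nk k - 2) * b (nk k) / (b (nk k - 1))^2 ≤ lam) :
    ∃ a₁ a₂ : ℝ, (∀ x : ℝ, 1 + a₁ * x + a₂ * x^2 ≠ 0) ∧
      ∀ k, ∀ z : ℂ,
        (Polynomial.aeval z) (Polynomial.X ^ (nk k - 2) *
          (Polynomial.C (a₂ * b (nk k - 2))
            + Polynomial.C (a₁ * b (nk k - 1)) * Polynomial.X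
            + Polynomial.C (b (nk k)) * Polynomial.X ^ 2)) = 0 → z.im = 0 := by
  set a₂ : ℝ := (1 + lam) / (8 * lam) with ha2
  have ha2q : 1/4 < a₂ := by
    rw [ha2, lt_div_iff₀ (by positivity)]
    nlinarith
  refine ⟨1, a₂, ?_, ?_⟩
  · intro x hx
    have h' : a₂*(1+1*x+a₂*x^2) = 0 := by rw [hx]; ring
    nlinarith [sq_nonneg (a₂*x + 1/2), h', ha2q]
  · intro k z hz
    have hn := hge k
    have h2 : 2 ≤ nk k := le_trans (le_max_right _ _) hn
    have hn0 : n₀ + 2 ≤ nk k := le_trans (le_max_left _ _) hn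
    have hne2 : b (nk k - 2) ≠ 0 := hbne _ (by omega)
    have hne1 : b (nk k - 1) ≠ 0 := hbne _ (by omega)
    have hne0 : b (nk k) ≠ 0 := hbne _ (by omega)
    have hsq : 0 < (b (nk k - 1))^2 := by positivity
    have hlk : b (nk k - 2) * b (nk k) ≤ lam * (b (nk k - 1))^2 := by
      have := hlam k
      rw [div_le_iff₀ hsq] at this
      linarith
    have hD : 4 * (b (nk k)) * (a₂ * b (nk k - 2)) ≤ (1 * b (nk k - 1))^2 := by
      have h1 : 4 * a₂ * (b (nk k - 2) * b (nk k)) ≤ 4 * a₂ * (lam * (b (nk k - 1))^2) := by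
        apply mul_le_mul_of_nonneg_left hlk
        positivity
      have h2 : 4 * a₂ * lam = (1 + lam) / 2 := by
        rw [ha2]; field_simp; ring
      nlinarith [sq_nonneg (b (nk k - 1))]
    simp only [map_mul, map_add, Polynomial.aeval_X, Polynomial.aeval_C, map_pow] at hz
    rcases mul_eq_zero.mp hz with h | h
    · rcases Nat.eq_zero_or_pos (nk k - 2) with hm | hm
      · rw [hm, pow_zero] at h
        exact absurd h one_ne_zero
      · have : z = 0 := pow_eq_zero_iff (Nat.pos_iff_ne_zero.mp hm) |>.mp h
        simp [this]
    · apply quad_im_zero (b (nk k)) (1 * b (nk k - 1)) (a₂ * b (nk k - 2)) hne0 hD z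
      simp only [Complex.coe_algebraMap, map_one] at h
      push_cast
      linear_combination h
end

section
/- Let B(z)=1+Σ_{n≥1} zⁿ/n and A(z)=(x−1)², i.e., a₀=1, a₁=−2, a₂=1. Then for every n ≥ 3 the Brenke polynomial generated by A associated to B equals pₙ(x) = (x^{n-2}/n)(x² − (2n/(n−1))x + n/(n−2)), and its quadratic factor has two non-real roots. -/
theorem brenke_counterexample_log_series (a b : ℕ → ℝ)
    (hb0 : b 0 = 1) (hb : ∀ m : ℕ, 1 ≤ m → b m = 1/(m:ℝ))
    (ha0 : a 0 = 1) (ha1 : a 1 = -2) (ha2 : a 2 = 1)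
    (ha : ∀ j, 3 ≤ j → a j = 0) :
    ∀ n : ℕ, 3 ≤ n →
      (∀ x : ℝ, ∑ j ∈ Finset.range (n+1), a j * b (n-j) * x^(n-j) =
        x^(n-2)/(n:ℝ) * (x^2 - (2*(n:ℝ)/((n:ℝ)-1))*x + (n:ℝ)/((n:ℝ)-2))) ∧
      (2*(n:ℝ)/((n:ℝ)-1))^2 - 4*(n:ℝ)/((n:ℝ)-2) < 0 := by
  intro n hn
  have ht3 : (3:ℝ) ≤ (n:ℝ) := by exact_mod_cast hn
  have h0 : (0:ℝ) < (n:ℝ) := by linarith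
  have h1 : (0:ℝ) < (n:ℝ) - 1 := by linarith
  have h2 : (0:ℝ) < (n:ℝ) - 2 := by linarith
  constructor
  · intro x
    have hsub : Finset.range 3 ⊆ Finset.range (n+1) := by
      apply Finset.range_subset_range.2; omega
    have hsum : ∑ j ∈ Finset.range (n+1), a j * b (n-j) * x^(n-j)
        = ∑ j ∈ Finset.range 3, a j * b (n-j) * x^(n-j) := by
      refine (Finset.sum_subset hsub ?_).symm
      intro j _ hj
      simp only [Finset.mem_range, not_lt] at hj
      rw [ha j hj]; ring
    rw [hsum]
    rw [Finset.sum_range_succ, Finset.sum_range_succ, Finset.sum_range_one]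
    have e0 : b (n - 0) = 1/(n:ℝ) := by
      rw [Nat.sub_zero]; exact hb n (by omega)
    have e1 : b (n - 1) = 1/((n:ℝ)-1) := by
      rw [hb (n-1) (by omega)]
      have : ((n-1 : ℕ) : ℝ) = (n:ℝ) - 1 := by
        have : (1:ℕ) ≤ n := by omega
        push_cast [Nat.cast_sub this]; ring
      rw [this]
    have e2 : b (n - 2) = 1/((n:ℝ)-2) := by
      rw [hb (n-2) (by omega)]
      have : ((n-2 : ℕ) : ℝ) = (n:ℝ) - 2 := by
        have : (2:ℕ) ≤ n := by omega
        push_cast [Nat.cast_sub this]; ring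
      rw [this]
    rw [e0, e1, e2, ha0, ha1, ha2, Nat.sub_zero]
    have hx1 : x ^ (n-1) = x ^ (n-2) * x := by
      rw [← pow_succ]; congr 1; omega
    have hxn : x ^ n = x ^ (n-2) * x^2 := by
      rw [← pow_add]; congr 1; omega
    rw [hx1, hxn]
    field_simp
    ring
  · have key : (2*(n:ℝ)/((n:ℝ)-1))^2 - 4*(n:ℝ)/((n:ℝ)-2)
        = (-4*(n:ℝ)) / (((n:ℝ)-1)^2 * ((n:ℝ)-2)) := by
      field_simp
      ring
    rw [key]
    apply div_neg_of_neg_of_pos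
    · linarith
    · positivity
end

section
/- Let p and q be real polynomials with only real zeros, deg p = k+1, deg q = k, whose zeros (with multiplicities) η₁ ≤ ... ≤ η_{k+1} and ζ₁ ≤ ... ≤ ζ_k interlace: η_i ≤ ζ_i ≤ η_{i+1} for all i. Then for all real α, β not both zero, the polynomial αp + βq has only real zeros. -/
open Polynomial Finset

lemma obr_lagrange_form {k : ℕ} (η : Fin (k+1) → ℝ) (hinj : Function.Injective η)
    (q : Polynomial ℝ) (hdeg : q.degree < k + 1) :
    q = ∑ i : Fin (k+1), C (q.eval (η i) * (∏ j ∈ univ.erase i, (η i - η j))⁻¹) *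
        ∏ j ∈ univ.erase i, (X - C (η j)) := by
  have hcard : (univ : Finset (Fin (k+1))).card = k + 1 := by simp
  have h := Lagrange.eq_interpolate (s := univ) (v := η) (hinj.injOn) (by
    rw [hcard]; exact_mod_cast hdeg)
  rw [Lagrange.interpolate_apply] at h
  conv_lhs => rw [h]
  refine Finset.sum_congr rfl fun i _ => ?_
  unfold Lagrange.basis Lagrange.basisDivisor
  rw [Finset.prod_mul_distrib, ← map_prod, ← Finset.prod_inv_distrib, ← mul_assoc, ← C_mul]

lemma obr_coeff_card {ι : Type*} (s : Finset ι) (v : ι → ℝ) (a : ℝ) :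
    (C a * ∏ j ∈ s, (X - C (v j))).coeff s.card = a := by
  have hm : (∏ j ∈ s, (X - C (v j))).Monic :=
    monic_prod_of_monic s _ (fun j _ => monic_X_sub_C (v j))
  have hd : (∏ j ∈ s, (X - C (v j))).natDegree = s.card := by
    rw [natDegree_prod_of_monic s _ (fun j _ => monic_X_sub_C (v j))]
    simp
  rw [coeff_C_mul, ← hd, hm.coeff_natDegree, mul_one]

lemma obr_sum_lam {k : ℕ} (cq : ℝ) (η : Fin (k+1) → ℝ) (hinj : Function.Injective η)
    (ζ : Fin k → ℝ)
    (hform : C cq * ∏ j : Fin k, (X - C (ζ j)) =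
      ∑ i : Fin (k+1), C ((fun i => (C cq * ∏ j : Fin k, (X - C (ζ j))).eval (η i) *
        (∏ j ∈ univ.erase i, (η i - η j))⁻¹) i) * ∏ j ∈ univ.erase i, (X - C (η j))) :
    ∑ i : Fin (k+1), (C cq * ∏ j : Fin k, (X - C (ζ j))).eval (η i) *
        (∏ j ∈ univ.erase i, (η i - η j))⁻¹ = cq := by
  have h := congrArg (fun r => r.coeff k) hform
  simp only [finset_sum_coeff] at h
  have h1 : (C cq * ∏ j : Fin k, (X - C (ζ j))).coeff k = cq := by
    have := obr_coeff_card (univ : Finset (Fin k)) ζ cq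
    simpa using this
  rw [h1] at h
  conv_rhs => rw [h]
  refine Finset.sum_congr rfl fun i _ => ?_
  have := obr_coeff_card ((univ : Finset (Fin (k+1))).erase i) η
    ((C cq * ∏ j : Fin k, (X - C (ζ j))).eval (η i) * (∏ j ∈ univ.erase i, (η i - η j))⁻¹)
  rw [Finset.card_erase_of_mem (mem_univ i)] at this
  simp only [Finset.card_univ, Fintype.card_fin, Nat.add_sub_cancel] at this
  exact this.symm

lemma obr_erase_prod {k : ℕ} (i : Fin (k+1)) (g : Fin (k+1) → ℝ) :
    ∏ j ∈ univ.erase i, g j = ∏ j : Fin k, g (i.succAbove j) := by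
  rw [← Finset.compl_singleton, ← Fin.image_succAbove_univ,
    Finset.prod_image (fun a _ b _ h => i.succAbove_right_injective h)]

lemma obr_lam_pos {k : ℕ} (η : Fin (k+1) → ℝ) (ζ : Fin k → ℝ)
    (hs : ∀ i : Fin k, η i.castSucc < ζ i ∧ ζ i < η i.succ) (i : Fin (k+1)) :
    0 < (∏ j : Fin k, (η i - ζ j)) * (∏ j ∈ univ.erase i, (η i - η j))⁻¹ := by
  have hsm : StrictMono η := Fin.strictMono_iff_lt_succ.2 fun j => (hs j).1.trans (hs j).2
  rw [obr_erase_prod, ← Finset.prod_inv_distrib, ← Finset.prod_mul_distrib]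
  refine Finset.prod_pos fun j _ => ?_
  rw [← div_eq_mul_inv, div_pos_iff]
  rcases lt_or_ge j.castSucc i with hlt | hle
  · left
    rw [Fin.succAbove_of_castSucc_lt _ _ hlt]
    have hji : j.succ ≤ i := hlt
    constructor
    · have := (hs j).2.trans_le (hsm.monotone hji)
      linarith
    · have h1 := (hs j).1
      have := ((hs j).1.trans (hs j).2).trans_le (hsm.monotone hji)
      linarith
  · right
    rw [Fin.succAbove_of_le_castSucc _ _ hle]
    have h0 := hsm.monotone hle
    constructor
    · have := h0.trans_lt (hs j).1
      linarith
    · have := (h0.trans_lt (hs j).1).trans (hs j).2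
      linarith

open Complex in
lemma obr_strict {k : ℕ} (cp cq : ℝ) (hcq : cq ≠ 0) (η : Fin (k+1) → ℝ) (ζ : Fin k → ℝ)
    (hs : ∀ i : Fin k, η i.castSucc < ζ i ∧ ζ i < η i.succ) (z : ℂ) :
    |cp| * |cq| * |z.im| ^ (2*k+1) ≤
      |((((cq : ℂ) * ∏ j : Fin k, (z - (ζ j : ℂ))) *
        (starRingEnd ℂ) ((cp : ℂ) * ∏ i : Fin (k+1), (z - (η i : ℂ))))).im| := by
  have hsm : StrictMono η := Fin.strictMono_iff_lt_succ.2 fun j => (hs j).1.trans (hs j).2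
  have hinj := hsm.injective
  set q : Polynomial ℝ := C cq * ∏ j : Fin k, (X - C (ζ j)) with hqdef
  have hdeg : q.degree < k + 1 := by
    have h1 : q.natDegree ≤ k := by
      refine le_trans (natDegree_mul_le) ?_
      rw [natDegree_C, natDegree_prod_of_monic _ _ (fun j _ => monic_X_sub_C (ζ j))]
      simp
    refine lt_of_le_of_lt q.degree_le_natDegree ?_
    exact_mod_cast Nat.lt_succ_of_le h1
  have hform := obr_lagrange_form η hinj q hdeg
  set lam : Fin (k+1) → ℝ := fun i => q.eval (η i) * (∏ j ∈ univ.erase i, (η i - η j))⁻¹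
    with hlamdef
  have hsum : ∑ i, lam i = cq := obr_sum_lam cq η hinj ζ hform
  -- evaluate at z over ℂ
  set A : Fin (k+1) → ℂ := fun i => ∏ j ∈ univ.erase i, (z - (η j : ℂ)) with hAdef
  have hQ : (cq : ℂ) * ∏ j : Fin k, (z - (ζ j : ℂ)) = ∑ i, (lam i : ℂ) * A i := by
    have h2 := congrArg (Polynomial.aeval z) hform
    rw [hqdef] at h2
    simp only [map_mul, map_sum, map_prod, map_sub, aeval_X, aeval_C,
      Complex.coe_algebraMap] at h2
    simp only [hlamdef, hqdef, hAdef]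
    push_cast at h2 ⊢
    exact h2
  have hconjP : (starRingEnd ℂ) ((cp : ℂ) * ∏ i : Fin (k+1), (z - (η i : ℂ))) =
      (cp : ℂ) * ∏ i : Fin (k+1), ((starRingEnd ℂ) z - (η i : ℂ)) := by
    simp [map_prod]
  have hsplit : ∀ i : Fin (k+1), ∏ j : Fin (k+1), ((starRingEnd ℂ) z - (η j : ℂ)) =
      ((starRingEnd ℂ) z - (η i : ℂ)) * (starRingEnd ℂ) (A i) := by
    intro i
    rw [hAdef, map_prod, ← Finset.mul_prod_erase _ _ (mem_univ i)]
    simp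
  have key : ((cq : ℂ) * ∏ j : Fin k, (z - (ζ j : ℂ))) *
      (starRingEnd ℂ) ((cp : ℂ) * ∏ i : Fin (k+1), (z - (η i : ℂ))) =
      ∑ i, ((cp * lam i * normSq (A i) : ℝ) : ℂ) * ((starRingEnd ℂ) z - (η i : ℂ)) := by
    rw [hQ, hconjP, Finset.sum_mul]
    refine Finset.sum_congr rfl fun i _ => ?_
    rw [hsplit i]
    have h3 : A i * (starRingEnd ℂ) (A i) = ((normSq (A i) : ℝ) : ℂ) := Complex.mul_conj _
    push_cast
    rw [← h3]
    ring
  have him : (((cq : ℂ) * ∏ j : Fin k, (z - (ζ j : ℂ))) *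
      (starRingEnd ℂ) ((cp : ℂ) * ∏ i : Fin (k+1), (z - (η i : ℂ)))).im =
      -z.im * cp * ∑ i, lam i * normSq (A i) := by
    rw [key, Complex.im_sum]
    rw [Finset.mul_sum]
    refine Finset.sum_congr rfl fun i _ => ?_
    simp [Complex.mul_im, Complex.sub_im, Complex.conj_im, Complex.ofReal_im, Complex.ofReal_re]
    ring
  set t : Fin (k+1) → ℝ := fun i => (∏ j : Fin k, (η i - ζ j)) *
    (∏ j ∈ univ.erase i, (η i - η j))⁻¹ with htdef
  have ht_pos : ∀ i, 0 < t i := fun i => obr_lam_pos η ζ hs i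
  have hlam_eq : ∀ i, lam i = cq * t i := by
    intro i
    rw [hlamdef, htdef, hqdef]
    simp only [eval_mul, eval_C, eval_prod, eval_sub, eval_X]
    ring
  have hsum_t : ∑ i, t i = 1 := by
    have h6 : ∑ i, lam i = cq * ∑ i, t i := by
      rw [Finset.mul_sum]
      exact Finset.sum_congr rfl fun i _ => hlam_eq i
    exact mul_left_cancel₀ hcq (by rw [← h6, hsum, mul_one])
  have hA_lb : ∀ i, (z.im ^ 2) ^ k ≤ normSq (A i) := by
    intro i
    have h1 : normSq (A i) = ∏ j ∈ univ.erase i, normSq (z - (η j : ℂ)) := by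
      rw [hAdef]; exact map_prod Complex.normSq _ _
    rw [h1]
    calc (z.im ^ 2) ^ k = ∏ _j ∈ univ.erase i, z.im ^ 2 := by
          rw [Finset.prod_const, Finset.card_erase_of_mem (mem_univ i)]
          simp
      _ ≤ ∏ j ∈ univ.erase i, normSq (z - (η j : ℂ)) := by
          refine Finset.prod_le_prod (fun j _ => sq_nonneg _) fun j _ => ?_
          rw [Complex.normSq_apply]
          simp only [Complex.sub_im, Complex.sub_re, Complex.ofReal_im, Complex.ofReal_re,
            sub_zero]
          nlinarith [sq_nonneg (z.re - η j)]
  have hS : ∑ i, lam i * normSq (A i) = cq * ∑ i, t i * normSq (A i) := by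
    rw [Finset.mul_sum]
    exact Finset.sum_congr rfl fun i _ => by rw [hlam_eq i]; ring
  have h4 : |z.im| ^ (2*k) ≤ ∑ i, t i * normSq (A i) := by
    calc |z.im| ^ (2*k) = (z.im ^ 2) ^ k := by rw [pow_mul, _root_.sq_abs]
      _ = ∑ i, t i * (z.im ^ 2) ^ k := by rw [← Finset.sum_mul, hsum_t, one_mul]
      _ ≤ ∑ i, t i * normSq (A i) :=
          Finset.sum_le_sum fun i _ => mul_le_mul_of_nonneg_left (hA_lb i) (ht_pos i).le
  have h5 : (0:ℝ) ≤ ∑ i, t i * normSq (A i) := le_trans (by positivity) h4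
  rw [him, hS]
  rw [abs_mul, abs_mul, abs_neg]
  calc |cp| * |cq| * |z.im| ^ (2*k+1)
      = |z.im| * |cp| * (|cq| * |z.im| ^ (2*k)) := by rw [pow_succ]; ring
    _ ≤ |z.im| * |cp| * (|cq| * ∑ i, t i * normSq (A i)) := by gcongr
    _ = |z.im| * |cp| * |cq * ∑ i, t i * normSq (A i)| := by
        rw [abs_mul, _root_.abs_of_nonneg h5]

open Complex in
lemma obr_weak {k : ℕ} (cp cq : ℝ) (hcq : cq ≠ 0) (η : Fin (k+1) → ℝ) (ζ : Fin k → ℝ)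
    (hint : ∀ i : Fin k, η i.castSucc ≤ ζ i ∧ ζ i ≤ η i.succ) (z : ℂ) :
    |cp| * |cq| * |z.im| ^ (2*k+1) ≤
      |((((cq : ℂ) * ∏ j : Fin k, (z - (ζ j : ℂ))) *
        (starRingEnd ℂ) ((cp : ℂ) * ∏ i : Fin (k+1), (z - (η i : ℂ))))).im| := by
  set F : ℝ → ℝ := fun ε =>
    ((((cq : ℂ) * ∏ j : Fin k, (z - ((ζ j + ε * ((j : ℕ) + 1/2) : ℝ) : ℂ))) *
      (starRingEnd ℂ) ((cp : ℂ) * ∏ i : Fin (k+1), (z - ((η i + ε * (i : ℕ) : ℝ) : ℂ)))).im)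
    with hFdef
  have hbound : ∀ ε ∈ Set.Ioi (0:ℝ), |cp| * |cq| * |z.im| ^ (2*k+1) ≤ |F ε| := by
    intro ε hε
    rw [Set.mem_Ioi] at hε
    have hs : ∀ i : Fin k, (fun i : Fin (k+1) => η i + ε * (i : ℕ)) i.castSucc <
        (fun j : Fin k => ζ j + ε * ((j : ℕ) + 1/2)) i ∧
        (fun j : Fin k => ζ j + ε * ((j : ℕ) + 1/2)) i <
        (fun i : Fin (k+1) => η i + ε * (i : ℕ)) i.succ := by
      intro i
      simp only [Fin.coe_castSucc, Fin.val_succ]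
      have h1 := (hint i).1
      have h2 := (hint i).2
      constructor
      · push_cast; nlinarith
      · push_cast; nlinarith
    exact obr_strict cp cq hcq (fun i : Fin (k+1) => η i + ε * (i : ℕ))
      (fun j : Fin k => ζ j + ε * ((j : ℕ) + 1/2)) hs z
  have hcont : Continuous F := by
    rw [hFdef]
    refine Complex.continuous_im.comp ?_
    refine Continuous.mul (Continuous.mul continuous_const ?_) ?_
    · exact continuous_finset_prod _ fun j _ => by fun_prop
    · exact Continuous.comp continuous_conj (by
        exact Continuous.mul continuous_const (continuous_finset_prod _ fun i _ => by fun_prop))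
  have hF0 : F 0 = ((((cq : ℂ) * ∏ j : Fin k, (z - (ζ j : ℂ))) *
      (starRingEnd ℂ) ((cp : ℂ) * ∏ i : Fin (k+1), (z - (η i : ℂ))))).im := by
    rw [hFdef]
    norm_num
  have htend : Filter.Tendsto (fun ε => |F ε|) (nhdsWithin 0 (Set.Ioi 0)) (nhds |F 0|) :=
    ((continuous_abs.comp hcont).continuousAt.tendsto).mono_left nhdsWithin_le_nhds
  have := ge_of_tendsto htend (Filter.eventually_of_mem self_mem_nhdsWithin hbound)
  rw [hF0] at this
  exact this

/-- One direction of Obreshkov's theorem. -/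
theorem obreshkov_real_rooted (k : ℕ) (cp cq : ℝ) (hcp : cp ≠ 0) (hcq : cq ≠ 0)
    (η : Fin (k+1) → ℝ) (ζ : Fin k → ℝ) (hη : Monotone η) (hζ : Monotone ζ)
    (hint : ∀ i : Fin k, η i.castSucc ≤ ζ i ∧ ζ i ≤ η i.succ)
    (p q : Polynomial ℝ)
    (hp : p = Polynomial.C cp * ∏ i : Fin (k+1), (Polynomial.X - Polynomial.C (η i)))
    (hq : q = Polynomial.C cq * ∏ i : Fin k, (Polynomial.X - Polynomial.C (ζ i)))
    (α β : ℝ) (hαβ : ¬(α = 0 ∧ β = 0)) :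
    ∀ z : ℂ, (Polynomial.aeval z) (Polynomial.C α * p + Polynomial.C β * q) = 0 →
      z.im = 0 := by
  intro z hz
  by_contra him
  set Pz : ℂ := (cp : ℂ) * ∏ i : Fin (k+1), (z - (η i : ℂ)) with hPzdef
  set Qz : ℂ := (cq : ℂ) * ∏ j : Fin k, (z - (ζ j : ℂ)) with hQzdef
  have hPeval : Polynomial.aeval z p = Pz := by
    rw [hp]
    simp [map_prod, hPzdef]
  have hQeval : Polynomial.aeval z q = Qz := by
    rw [hq]
    simp [map_prod, hQzdef]
  rw [map_add, map_mul, map_mul, Polynomial.aeval_C, Polynomial.aeval_C, hPeval, hQeval] at hz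
  simp only [Complex.coe_algebraMap] at hz
  have hPz_ne : Pz ≠ 0 := by
    rw [hPzdef]
    refine mul_ne_zero (by exact_mod_cast hcp) ?_
    refine Finset.prod_ne_zero_iff.2 fun i _ => ?_
    intro h0
    apply him
    have : z = (η i : ℂ) := by linear_combination h0
    rw [this]
    exact Complex.ofReal_im _
  -- the key bound
  have hkey := obr_weak cp cq hcq η ζ hint z
  have hpos : 0 < |cp| * |cq| * |z.im| ^ (2*k+1) := by positivity
  -- show the imaginary part is zero, contradiction
  have hcases : β = 0 ∨ β ≠ 0 := em _
  rcases hcases with hβ | hβ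
  · have hα : α ≠ 0 := fun h => hαβ ⟨h, hβ⟩
    rw [hβ] at hz
    simp only [Complex.ofReal_zero, zero_mul, add_zero] at hz
    have : Pz = 0 := by
      have hα' : (α : ℂ) ≠ 0 := by exact_mod_cast hα
      exact (mul_eq_zero.1 hz).resolve_left hα'
    exact hPz_ne this
  · have hβ' : (β : ℂ) ≠ 0 := by exact_mod_cast hβ
    have hQz : Qz = -((α : ℂ) / (β : ℂ)) * Pz := by
      field_simp
      linear_combination hz
    have hcalc : Qz * (starRingEnd ℂ) Pz = ((-(α/β) * Complex.normSq Pz : ℝ) : ℂ) := by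
      rw [hQz, mul_assoc, Complex.mul_conj]
      push_cast
      ring
    have him0 : (Qz * (starRingEnd ℂ) Pz).im = 0 := by
      rw [hcalc]
      exact Complex.ofReal_im _
    rw [hQzdef, hPzdef] at him0
    rw [him0] at hkey
    simp only [abs_zero] at hkey
    linarith
end

section
/- Let μ > −1 and n ≥ 3, and consider A(z) = (z+1)³ and the Dunkl coefficients c_{n,μ} with c_{2k,μ} = 2^{2k} k! (μ+1)_k and c_{2k+1,μ} = 2^{2k+1} k! (μ+1)_{k+1}. Let rₙ(x) = x³ + 3(c_{n,μ}/c_{n-1,μ})x² + 3(c_{n,μ}/c_{n-2,μ})x + c_{n,μ}/c_{n-3,μ}. Then the discriminant Δ(rₙ) of rₙ satisfies lim_{n→∞} Δ(rₙ)/n⁴ = −2²·3³·(2μ+1)². -/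
open Filter

private lemma parity_tendsto {f : ℕ → ℝ} {l : ℝ}
    (he : Filter.Tendsto (fun k => f (2*k+4)) Filter.atTop (nhds l))
    (ho : Filter.Tendsto (fun k => f (2*k+5)) Filter.atTop (nhds l)) :
    Filter.Tendsto f Filter.atTop (nhds l) := by
  intro s hs
  rw [Filter.mem_map, Filter.mem_atTop_sets]
  obtain ⟨a, ha⟩ := Filter.mem_atTop_sets.mp (Filter.mem_map.mp (he hs))
  obtain ⟨b, hb⟩ := Filter.mem_atTop_sets.mp (Filter.mem_map.mp (ho hs))
  refine ⟨2*a+2*b+6, fun n hn => ?_⟩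
  rcases Nat.even_or_odd n with ⟨k, hk⟩ | ⟨k, hk⟩
  · have h4 : n = 2*(k-2)+4 := by omega
    rw [h4]; exact ha _ (by omega)
  · have h5 : n = 2*(k-2)+5 := by omega
    rw [h5]; exact hb _ (by omega)

set_option maxHeartbeats 2000000 in
theorem dunkl_discriminant_limit (μ : ℝ) (hμ : -1 < μ) (c : ℕ → ℝ)
    (hce : ∀ k : ℕ, c (2*k) = 2^(2*k) * (k.factorial : ℝ)
      * (ascPochhammer ℝ k).eval (μ+1))
    (hco : ∀ k : ℕ, c (2*k+1) = 2^(2*k+1) * (k.factorial : ℝ)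
      * (ascPochhammer ℝ (k+1)).eval (μ+1)) :
    Filter.Tendsto (fun n : ℕ =>
      (18 * (3*c n/c (n-1)) * (3*c n/c (n-2)) * (c n/c (n-3))
        - 4 * (3*c n/c (n-1))^3 * (c n/c (n-3))
        + (3*c n/c (n-1))^2 * (3*c n/c (n-2))^2
        - 4 * (3*c n/c (n-2))^3
        - 27 * (c n/c (n-3))^2) / (n:ℝ)^4)
      Filter.atTop (nhds (-(2^2 * 3^3 * (2*μ+1)^2))) := by
  have hP : ∀ k : ℕ, (0:ℝ) < (ascPochhammer ℝ k).eval (μ+1) :=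
    fun k => ascPochhammer_pos k _ (by linarith)
  apply parity_tendsto
  · -- even subsequence: n = 2m+4
    set G : ℝ → ℝ := fun x =>
      -108*(2*μ+1)^2 - (432*μ^3+432*μ^2+216*μ)*x - 108*μ^2*x^2 with hG
    have hGc : Continuous G := by fun_prop
    have h0 : G 0 = -(2^2 * 3^3 * (2*μ+1)^2) := by
      have hb : G 0 = -108*(2*μ+1)^2 - (432*μ^3+432*μ^2+216*μ)*0 - 108*μ^2*0^2 := by
        rw [hG]
      rw [hb]; ring
    have hx : Filter.Tendsto (fun m : ℕ => ((m:ℝ)+2)⁻¹) Filter.atTop (nhds 0) :=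
      tendsto_inv_atTop_zero.comp
        (tendsto_atTop_add_const_right _ 2 tendsto_natCast_atTop_atTop)
    have hlim := (hGc.tendsto 0).comp hx
    rw [h0] at hlim
    refine hlim.congr fun m => ?_
    have hc0 : c (2*m+4) = 2^(2*m+4) * ((m+2).factorial : ℝ)
        * (ascPochhammer ℝ (m+2)).eval (μ+1) := by
      have := hce (m+2); rw [show 2*(m+2) = 2*m+4 from by ring] at this; exact this
    have hc1 : c (2*m+3) = 2^(2*m+3) * ((m+1).factorial : ℝ)
        * (ascPochhammer ℝ (m+2)).eval (μ+1) := by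
      have := hco (m+1); rw [show 2*(m+1)+1 = 2*m+3 from by ring] at this; exact this
    have hc2 : c (2*m+2) = 2^(2*m+2) * ((m+1).factorial : ℝ)
        * (ascPochhammer ℝ (m+1)).eval (μ+1) := by
      have := hce (m+1); rw [show 2*(m+1) = 2*m+2 from by ring] at this; exact this
    have hc3 : c (2*m+1) = 2^(2*m+1) * ((m).factorial : ℝ)
        * (ascPochhammer ℝ (m+1)).eval (μ+1) := hco m
    have hp2 : (ascPochhammer ℝ (m+2)).eval (μ+1)
        = (ascPochhammer ℝ (m+1)).eval (μ+1) * ((μ+1) + (m+1 : ℕ)) :=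
      ascPochhammer_succ_eval (m+1) _
    have hQ : (ascPochhammer ℝ (m+1)).eval (μ+1) ≠ 0 := (hP (m+1)).ne'
    have hf : ((m).factorial : ℝ) ≠ 0 := Nat.cast_ne_zero.mpr (Nat.factorial_ne_zero m)
    have hf1 : ((m+1).factorial : ℝ) ≠ 0 := Nat.cast_ne_zero.mpr (Nat.factorial_ne_zero _)
    have hmr : (0:ℝ) ≤ (m:ℝ) := Nat.cast_nonneg m
    have e2 : (μ+1) + (((m:ℝ))+1) ≠ 0 := by linarith
    have hpw : ∀ j : ℕ, ((2:ℝ))^j ≠ 0 := fun j => pow_ne_zero j two_ne_zero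
    have d1 : c (2*m+4) / c (2*m+3) = 2*((m:ℝ)+2) := by
      rw [hc0, hc1, hp2, Nat.factorial_succ (m+1)]
      push_cast
      field_simp
      ring
    have d2 : c (2*m+4) / c (2*m+2) = 4*((m:ℝ)+2)*(μ+(m:ℝ)+2) := by
      rw [hc0, hc2, hp2, Nat.factorial_succ (m+1)]
      push_cast
      field_simp
      ring
    have d3 : c (2*m+4) / c (2*m+1) = 8*((m:ℝ)+2)*((m:ℝ)+1)*(μ+(m:ℝ)+2) := by
      rw [hc0, hc3, hp2, Nat.factorial_succ (m+1), Nat.factorial_succ m]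
      push_cast
      field_simp
      ring
    simp only [Function.comp, show 2*m+4-1 = 2*m+3 from by omega,
      show 2*m+4-2 = 2*m+2 from by omega, show 2*m+4-3 = 2*m+1 from by omega,
      mul_div_assoc, d1, d2, d3, hG]
    have hm2 : ((m:ℝ)+2) ≠ 0 := by positivity
    have hn4 : ((2*m+4 : ℕ):ℝ) ≠ 0 := by positivity
    push_cast
    field_simp
    ring
  · -- odd subsequence: n = 2m+5
    set G : ℝ → ℝ := fun x =>
      -108*(2*μ+1)^2 + (-1296*μ-3456*μ^2-2592*μ^3)*x
      + (216+432*μ-3024*μ^2-7776*μ^3-5184*μ^4)*x^2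
      + (1296*μ+4320*μ^2+2592*μ^3-3456*μ^4-3456*μ^5)*x^3
      + (-108+2592*μ^2+7776*μ^3+8640*μ^4+3456*μ^5)*x^4 with hG
    have hGc : Continuous G := by fun_prop
    have h0 : G 0 = -(2^2 * 3^3 * (2*μ+1)^2) := by
      have hb : G 0 = -108*(2*μ+1)^2 + (-1296*μ-3456*μ^2-2592*μ^3)*0
          + (216+432*μ-3024*μ^2-7776*μ^3-5184*μ^4)*0^2
          + (1296*μ+4320*μ^2+2592*μ^3-3456*μ^4-3456*μ^5)*0^3
          + (-108+2592*μ^2+7776*μ^3+8640*μ^4+3456*μ^5)*0^4 := by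
        rw [hG]
      rw [hb]; ring
    have hx : Filter.Tendsto (fun m : ℕ => (2*(m:ℝ)+5)⁻¹) Filter.atTop (nhds 0) :=
      tendsto_inv_atTop_zero.comp
        (tendsto_atTop_add_const_right _ 5
          (tendsto_natCast_atTop_atTop.const_mul_atTop (by norm_num : (0:ℝ) < 2)))
    have hlim := (hGc.tendsto 0).comp hx
    rw [h0] at hlim
    refine hlim.congr fun m => ?_
    have hc0 : c (2*m+5) = 2^(2*m+5) * ((m+2).factorial : ℝ)
        * (ascPochhammer ℝ (m+3)).eval (μ+1) := by
      have := hco (m+2); rw [show 2*(m+2)+1 = 2*m+5 from by ring] at this; exact this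
    have hc1 : c (2*m+4) = 2^(2*m+4) * ((m+2).factorial : ℝ)
        * (ascPochhammer ℝ (m+2)).eval (μ+1) := by
      have := hce (m+2); rw [show 2*(m+2) = 2*m+4 from by ring] at this; exact this
    have hc2 : c (2*m+3) = 2^(2*m+3) * ((m+1).factorial : ℝ)
        * (ascPochhammer ℝ (m+2)).eval (μ+1) := by
      have := hco (m+1); rw [show 2*(m+1)+1 = 2*m+3 from by ring] at this; exact this
    have hc3 : c (2*m+2) = 2^(2*m+2) * ((m+1).factorial : ℝ)
        * (ascPochhammer ℝ (m+1)).eval (μ+1) := by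
      have := hce (m+1); rw [show 2*(m+1) = 2*m+2 from by ring] at this; exact this
    have hp3 : (ascPochhammer ℝ (m+3)).eval (μ+1)
        = (ascPochhammer ℝ (m+2)).eval (μ+1) * ((μ+1) + (m+2 : ℕ)) :=
      ascPochhammer_succ_eval (m+2) _
    have hp2 : (ascPochhammer ℝ (m+2)).eval (μ+1)
        = (ascPochhammer ℝ (m+1)).eval (μ+1) * ((μ+1) + (m+1 : ℕ)) :=
      ascPochhammer_succ_eval (m+1) _
    have hQ : (ascPochhammer ℝ (m+1)).eval (μ+1) ≠ 0 := (hP (m+1)).ne'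
    have hQ2 : (ascPochhammer ℝ (m+2)).eval (μ+1) ≠ 0 := (hP (m+2)).ne'
    have hf1 : ((m+1).factorial : ℝ) ≠ 0 := Nat.cast_ne_zero.mpr (Nat.factorial_ne_zero _)
    have hf2 : ((m+2).factorial : ℝ) ≠ 0 := Nat.cast_ne_zero.mpr (Nat.factorial_ne_zero _)
    have hmr : (0:ℝ) ≤ (m:ℝ) := Nat.cast_nonneg m
    have e2 : (μ+1) + (((m:ℝ))+1) ≠ 0 := by linarith
    have e3 : (μ+1) + (((m:ℝ))+2) ≠ 0 := by linarith
    have d1 : c (2*m+5) / c (2*m+4) = 2*(μ+(m:ℝ)+3) := by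
      rw [hc0, hc1, hp3]
      push_cast
      field_simp
      ring
    have d2 : c (2*m+5) / c (2*m+3) = 4*((m:ℝ)+2)*(μ+(m:ℝ)+3) := by
      rw [hc0, hc2, hp3, Nat.factorial_succ (m+1)]
      push_cast
      field_simp
      ring
    have d3 : c (2*m+5) / c (2*m+2) = 8*((m:ℝ)+2)*(μ+(m:ℝ)+2)*(μ+(m:ℝ)+3) := by
      rw [hc0, hc3, hp3, hp2, Nat.factorial_succ (m+1)]
      push_cast
      field_simp
      ring
    simp only [Function.comp, show 2*m+5-1 = 2*m+4 from by omega,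
      show 2*m+5-2 = 2*m+3 from by omega, show 2*m+5-3 = 2*m+2 from by omega,
      mul_div_assoc, d1, d2, d3, hG]
    have hm5 : (2*(m:ℝ)+5) ≠ 0 := by positivity
    have hn4 : ((2*m+5 : ℕ):ℝ) ≠ 0 := by positivity
    push_cast
    field_simp
    ring
end

section
/- Let A(z) = Σ aₙzⁿ be analytic at 0 with radius of convergence r > 0 and a₀ = 1, and let (bₙ) be nonzero real numbers with a sequence (τₙ) of nonzero reals satisfying lim_n b_{n-j}/(bₙτₙʲ) = 1 for all j ≥ 1, together with the uniform bound |b_{n-j}/(bₙτₙʲ)| ≤ M for all j, n ≥ N. Then the polynomials fₙ(z) = Σ_{j=0}^{n} a_j (b_{n-j}/(bₙτₙʲ)) zʲ converge to A(z) uniformly on compact subsets of {|z| < r}. -/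
set_option maxHeartbeats 1000000


theorem brenke_asymptotic (a : ℕ → ℝ) (ha0 : a 0 = 1) (r : ℝ) (hr : 0 < r)
    (hconv : ∀ z : ℂ, ‖z‖ < r → Summable (fun n : ℕ => (a n : ℂ) * z^n))
    (b τ : ℕ → ℝ) (hb : ∀ n, b n ≠ 0) (hτ : ∀ n, τ n ≠ 0)
    (hlim : ∀ j : ℕ, 1 ≤ j →
      Filter.Tendsto (fun n : ℕ => b (n-j) / (b n * τ n ^ j)) Filter.atTop (nhds 1))
    (M : ℝ) (N : ℕ)
    (hMN : ∀ j n : ℕ, N ≤ j → N ≤ n → |b (n-j) / (b n * τ n ^ j)| ≤ M) :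
    ∀ K : Set ℂ, IsCompact K → K ⊆ Metric.ball 0 r →
      TendstoUniformlyOn
        (fun n z => ∑ j ∈ Finset.range (n+1),
          (a j : ℂ) * ((b (n-j) / (b n * τ n ^ j) : ℝ) : ℂ) * z^j)
        (fun z => ∑' j : ℕ, (a j : ℂ) * z^j) Filter.atTop K := by
  classical
  intro K hK hKr
  rcases K.eq_empty_or_nonempty with rfl | hne
  · exact tendstoUniformlyOn_empty
  obtain ⟨z0, hz0K, hz0'⟩ := hK.exists_isMaxOn hne continuous_norm.continuousOn
  have hz0 : ∀ z ∈ K, ‖z‖ ≤ ‖z0‖ := fun z hz => hz0' hz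
  set c : ℕ → ℕ → ℝ := fun n j => b (n-j) / (b n * τ n ^ j) with hc
  set ρ := ‖z0‖ with hρdef
  have hρ0 : 0 ≤ ρ := norm_nonneg z0
  have hρr : ρ < r := by
    have := hKr hz0K
    simpa [Metric.mem_ball, Complex.dist_eq] using this
  clear_value ρ
  obtain ⟨ρ', hρρ', hρ'r⟩ := exists_between hρr
  have hρ'0 : 0 < ρ' := lt_of_le_of_lt hρ0 hρρ'
  -- summability of |a j| * ρ^j
  have hsum' : Summable (fun n => (a n : ℂ) * ((ρ' : ℝ) : ℂ)^n) := by
    apply hconv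
    simpa [Complex.norm_real, Real.norm_eq_abs, abs_of_pos hρ'0] using hρ'r
  have htends : Filter.Tendsto (fun n => |a n| * ρ'^n) Filter.atTop (nhds 0) := by
    have h1 := (hsum'.tendsto_atTop_zero).norm
    simp only [norm_mul, norm_pow, Complex.norm_real, norm_zero] at h1
    simpa [Real.norm_eq_abs, abs_of_pos hρ'0] using h1
  obtain ⟨C, hC⟩ := htends.bddAbove_range
  have hCle : ∀ n, |a n| * ρ'^n ≤ C := fun n => hC ⟨n, rfl⟩
  have hσ : Summable (fun j : ℕ => |a j| * ρ^j) := by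
    have hgeo : Summable (fun j : ℕ => C * (ρ/ρ')^j) :=
      (summable_geometric_of_lt_one (by positivity) (by rw [div_lt_one hρ'0]; exact hρρ')).mul_left C
    apply hgeo.of_nonneg_of_le (fun j => by positivity)
    intro j
    have hx : ρ'^j ≠ 0 := (pow_pos hρ'0 j).ne'
    have heq : |a j| * ρ^j = (|a j| * ρ'^j) * (ρ/ρ')^j := by
      rw [div_pow]
      field_simp
    rw [heq]
    exact mul_le_mul_of_nonneg_right (hCle j) (by positivity)
  set S := ∑' j : ℕ, |a j| * ρ^j with hSdef
  have hS0 : 0 ≤ S := tsum_nonneg (fun j => by positivity)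
  clear_value S
  rw [Metric.tendstoUniformlyOn_iff]
  intro ε hε
  have hM0 : 0 ≤ M := le_trans (abs_nonneg _) (hMN N N le_rfl le_rfl)
  set T : ℝ := M + 2 with hTdef
  have hT1 : 1 ≤ T := by rw [hTdef]; linarith
  have hT0 : 0 < T := by linarith
  clear_value T
  set δ := ε/(3*(S+1)) with hδdef
  have hδ0 : 0 < δ := by positivity
  clear_value δ
  obtain ⟨J0, hJ0⟩ := Filter.eventually_atTop.1
    ((tendsto_sum_nat_add (fun j => |a j| * ρ^j)).eventually_lt_const
      (show (0:ℝ) < ε/(3*T) by positivity))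
  set J := max J0 N with hJdef
  have hJJ0 : J0 ≤ J := le_max_left _ _
  have hJN : N ≤ J := le_max_right _ _
  have hsmall : ∀ᶠ n in Filter.atTop, ∀ j ∈ Finset.range J, |1 - c n j| ≤ δ := by
    rw [Filter.eventually_all_finset]
    intro j _
    rcases Nat.eq_zero_or_pos j with rfl | hj1
    · filter_upwards with n
      simp [hc, hb n, hδ0.le]
    · filter_upwards [Metric.tendsto_nhds.1 (hlim j hj1) δ hδ0] with n hn
      rw [Real.dist_eq] at hn
      rw [abs_sub_comm]
      exact hn.le
  filter_upwards [hsmall, Filter.eventually_ge_atTop J] with n hn hnJ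
  intro z hzK
  have hz : ‖z‖ ≤ ρ := hz0 z hzK
  have hzr : ‖z‖ < r := lt_of_le_of_lt hz hρr
  have hsz : Summable (fun j => (a j : ℂ) * z^j) := hconv z hzr
  rw [dist_eq_norm]
  have hsplit := Summable.sum_add_tsum_nat_add (n+1) hsz
  have key : (∑' j, (a j : ℂ) * z^j) -
      (∑ j ∈ Finset.range (n+1), (a j : ℂ) * ((c n j : ℝ) : ℂ) * z^j)
      = (∑ j ∈ Finset.range (n+1), (a j : ℂ) * (((1 - c n j : ℝ)) : ℂ) * z^j)
        + ∑' k : ℕ, (a (k+(n+1)) : ℂ) * z^(k+(n+1)) := by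
    rw [← hsplit, add_sub_right_comm, ← Finset.sum_sub_distrib]
    congr 1
    apply Finset.sum_congr rfl
    intro j _
    push_cast
    ring
  rw [key]
  -- bounds
  have hpow : ∀ j : ℕ, ‖z‖ ^ j ≤ ρ ^ j := fun j =>
    pow_le_pow_left₀ (norm_nonneg z) hz j
  have hterm : ∀ j ∈ Finset.range (n+1),
      ‖(a j : ℂ) * (((1 - c n j : ℝ)) : ℂ) * z^j‖ ≤ |a j| * |1 - c n j| * ρ^j := by
    intro j _
    rw [norm_mul, norm_mul, norm_pow, Complex.norm_real, Complex.norm_real,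
      Real.norm_eq_abs, Real.norm_eq_abs]
    exact mul_le_mul_of_nonneg_left (hpow j) (by positivity)
  have htailsum : Summable (fun k : ℕ => |a (k+(n+1))| * ρ^(k+(n+1))) :=
    (summable_nat_add_iff (f := fun j : ℕ => |a j| * ρ^j) (n+1)).2 hσ
  have htail_bound : ‖∑' k : ℕ, (a (k+(n+1)) : ℂ) * z^(k+(n+1))‖
      ≤ ∑' k : ℕ, |a (k+(n+1))| * ρ^(k+(n+1)) := by
    have hnorm_le : ∀ k : ℕ, ‖(a (k+(n+1)) : ℂ) * z^(k+(n+1))‖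
        ≤ |a (k+(n+1))| * ρ^(k+(n+1)) := by
      intro k
      rw [norm_mul, norm_pow, Complex.norm_real, Real.norm_eq_abs]
      exact mul_le_mul_of_nonneg_left (hpow _) (abs_nonneg _)
    have hsn : Summable (fun k : ℕ => ‖(a (k+(n+1)) : ℂ) * z^(k+(n+1))‖) :=
      htailsum.of_nonneg_of_le (fun k => norm_nonneg _) hnorm_le
    calc ‖∑' k : ℕ, (a (k+(n+1)) : ℂ) * z^(k+(n+1))‖
        ≤ ∑' k : ℕ, ‖(a (k+(n+1)) : ℂ) * z^(k+(n+1))‖ := norm_tsum_le_tsum_norm hsn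
      _ ≤ ∑' k : ℕ, |a (k+(n+1))| * ρ^(k+(n+1)) :=
          Summable.tsum_le_tsum hnorm_le hsn htailsum
  -- split the finite sum
  have hJn1 : J ≤ n + 1 := le_trans hnJ (Nat.le_succ n)
  have hsum_split : ∑ j ∈ Finset.range (n+1), |a j| * |1 - c n j| * ρ^j
      = (∑ j ∈ Finset.range J, |a j| * |1 - c n j| * ρ^j)
        + ∑ j ∈ Finset.Ico J (n+1), |a j| * |1 - c n j| * ρ^j := by
    exact (Finset.sum_range_add_sum_Ico _ hJn1).symm
  -- first part
  have hpart1 : ∑ j ∈ Finset.range J, |a j| * |1 - c n j| * ρ^j ≤ δ * S := by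
    calc ∑ j ∈ Finset.range J, |a j| * |1 - c n j| * ρ^j
        ≤ ∑ j ∈ Finset.range J, δ * (|a j| * ρ^j) := by
          apply Finset.sum_le_sum
          intro j hj
          have := hn j hj
          calc |a j| * |1 - c n j| * ρ^j ≤ |a j| * δ * ρ^j := by
                apply mul_le_mul_of_nonneg_right _ (by positivity)
                exact mul_le_mul_of_nonneg_left this (abs_nonneg _)
            _ = δ * (|a j| * ρ^j) := by ring
      _ = δ * ∑ j ∈ Finset.range J, |a j| * ρ^j := by rw [Finset.mul_sum]
      _ ≤ δ * S := by
          apply mul_le_mul_of_nonneg_left _ hδ0.le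
          exact hSdef ▸ Summable.sum_le_tsum _ (fun j _ => by positivity) hσ
  -- middle part
  have hpart2 : ∑ j ∈ Finset.Ico J (n+1), |a j| * |1 - c n j| * ρ^j
      ≤ T * ∑' k : ℕ, |a (k+J)| * ρ^(k+J) := by
    calc ∑ j ∈ Finset.Ico J (n+1), |a j| * |1 - c n j| * ρ^j
        ≤ ∑ j ∈ Finset.Ico J (n+1), T * (|a j| * ρ^j) := by
          apply Finset.sum_le_sum
          intro j hj
          obtain ⟨hj1, _⟩ := Finset.mem_Ico.1 hj
          have hcb : |1 - c n j| ≤ T := by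
            have h1 : |c n j| ≤ M := hMN j n (le_trans hJN hj1) (le_trans hJN (le_trans hj1 (by omega)))
            calc |1 - c n j| ≤ |(1:ℝ)| + |c n j| := abs_sub _ _
              _ ≤ 1 + M := by rw [abs_one]; linarith
              _ ≤ T := by rw [hTdef]; linarith
          calc |a j| * |1 - c n j| * ρ^j ≤ |a j| * T * ρ^j := by
                apply mul_le_mul_of_nonneg_right _ (by positivity)
                exact mul_le_mul_of_nonneg_left hcb (abs_nonneg _)
            _ = T * (|a j| * ρ^j) := by ring
      _ = T * ∑ j ∈ Finset.Ico J (n+1), |a j| * ρ^j := by rw [Finset.mul_sum]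
      _ ≤ T * ∑' k : ℕ, |a (k+J)| * ρ^(k+J) := by
          apply mul_le_mul_of_nonneg_left _ hT0.le
          rw [Finset.sum_Ico_eq_sum_range]
          calc ∑ i ∈ Finset.range (n+1-J), |a (J+i)| * ρ^(J+i)
              = ∑ i ∈ Finset.range (n+1-J), |a (i+J)| * ρ^(i+J) := by
                apply Finset.sum_congr rfl
                intro i _
                rw [add_comm]
            _ ≤ ∑' k : ℕ, |a (k+J)| * ρ^(k+J) :=
                Summable.sum_le_tsum _ (fun k _ => by positivity) ((summable_nat_add_iff (f := fun j : ℕ => |a j| * ρ^j) J).2 hσ)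
  -- the numeric bounds
  have hb1 : δ * S < ε/3 := by
    have hS1 : (0:ℝ) < S + 1 := by linarith
    have h4 : δ * (S+1) = ε/3 := by
      rw [hδdef, div_mul_eq_mul_div, mul_comm 3 (S+1), ← div_div,
        mul_div_cancel_right₀ _ hS1.ne']
    nlinarith
  have hb2 : T * (∑' k : ℕ, |a (k+J)| * ρ^(k+J)) < ε/3 := by
    have h2 := hJ0 J hJJ0
    calc T * (∑' k : ℕ, |a (k+J)| * ρ^(k+J)) < T * (ε/(3*T)) := by
          exact (mul_lt_mul_iff_right₀ hT0).2 h2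
      _ = ε/3 := by
          field_simp
  have hb3 : (∑' k : ℕ, |a (k+(n+1))| * ρ^(k+(n+1))) < ε/3 := by
    have h3 := hJ0 (n+1) (le_trans hJJ0 hJn1)
    calc (∑' k : ℕ, |a (k+(n+1))| * ρ^(k+(n+1))) < ε/(3*T) := h3
      _ ≤ ε/3 := by
          apply div_le_div_of_nonneg_left hε.le (by norm_num)
          nlinarith
  calc ‖(∑ j ∈ Finset.range (n+1), (a j : ℂ) * (((1 - c n j : ℝ)) : ℂ) * z^j)
        + ∑' k : ℕ, (a (k+(n+1)) : ℂ) * z^(k+(n+1))‖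
      ≤ ‖∑ j ∈ Finset.range (n+1), (a j : ℂ) * (((1 - c n j : ℝ)) : ℂ) * z^j‖
        + ‖∑' k : ℕ, (a (k+(n+1)) : ℂ) * z^(k+(n+1))‖ := norm_add_le _ _
    _ ≤ (∑ j ∈ Finset.range (n+1), |a j| * |1 - c n j| * ρ^j)
        + ∑' k : ℕ, |a (k+(n+1))| * ρ^(k+(n+1)) :=
        add_le_add (le_trans (norm_sum_le _ _) (Finset.sum_le_sum hterm)) htail_bound
    _ < ε := by
        rw [hsum_split]
        have := add_lt_add_of_le_of_lt (add_le_add hpart1 hpart2)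
          (lt_of_le_of_lt le_rfl hb3)
        linarith [hb1, hb2, hb3, hpart1, hpart2]
end

section
/- Let aₙ, cₙ be nonzero real sequences with a₀=c₀=1 satisfying lim_n a_{n-1}a_{n+1}/aₙ² = 1 and lim_n c_{n-1}c_{n+1}/cₙ² = 1, and let bₙ be any real sequence with b₀ = 1. For fixed n, define p_{n,s}(z) = (c_s/a_s) Σ_{j=0}^{n} a_{n-j+s} (c_{n-j}/c_{n-j+s}) b_j zʲ and μ_m = a_m c_{m+1}/(a_{m+1} c_m). Then for each fixed n, lim_{s→∞} (a_s c_{n+s}/(a_{n+s} c_s)) · p_{n,s}(z/μ_{n+s}) = Σ_{j=0}^{n} c_{n-j} b_j zʲ, with convergence of each coefficient. -/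
open Filter

lemma brenke_aux (A μ : ℕ → ℝ) (hA0 : ∀ m, A m ≠ 0) (hμ0 : ∀ m, μ m ≠ 0)
    (hAμ : ∀ m, A m = A (m+1) * μ m)
    (hratio : Tendsto (fun m : ℕ => μ m / μ (m+1)) atTop (nhds 1)) :
    ∀ d : ℕ, Tendsto (fun m : ℕ => A m / (A (m+d) * μ (m+d)^d)) atTop (nhds 1) := by
  intro d
  induction d with
  | zero =>
    have : (fun m : ℕ => A m / (A (m+0) * μ (m+0)^0)) = fun _ => (1:ℝ) := by
      funext m; simp [div_self (hA0 m)]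
    rw [this]; exact tendsto_const_nhds
  | succ d ih =>
    have hr : Tendsto (fun m : ℕ => (μ (m+d) / μ (m+d+1))^(d+1)) atTop (nhds 1) := by
      have h0 : Tendsto (fun m : ℕ => μ (m+d) / (μ (m+d+1))) atTop (nhds 1) :=
        hratio.comp (tendsto_add_atTop_nat d)
      simpa using h0.pow (d+1)
    have h := ih.mul hr
    rw [mul_one] at h
    have heq : (fun m : ℕ => A m / (A (m+d) * μ (m+d)^d) * (μ (m+d) / μ (m+d+1))^(d+1))
        = fun m : ℕ => A m / (A (m+(d+1)) * μ (m+(d+1))^(d+1)) := by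
      funext m
      have h2 : m + (d+1) = m + d + 1 := by ring
      rw [h2, hAμ (m+d)]
      have n1 := hA0 (m+d+1)
      have n2 := hμ0 (m+d)
      have n3 := hμ0 (m+d+1)
      rw [div_pow]
      field_simp
      ring
    rw [heq] at h
    exact h

theorem brenke_coefficientwise_asymptotic (a c : ℕ → ℝ)
    (ha : ∀ n, a n ≠ 0) (hc : ∀ n, c n ≠ 0) (ha0 : a 0 = 1) (hc0 : c 0 = 1)
    (hla : Filter.Tendsto (fun n : ℕ => a (n-1) * a (n+1) / (a n)^2)
      Filter.atTop (nhds 1))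
    (hlc : Filter.Tendsto (fun n : ℕ => c (n-1) * c (n+1) / (c n)^2)
      Filter.atTop (nhds 1))
    (b : ℕ → ℝ) (hb0 : b 0 = 1) :
    ∀ n j : ℕ, j ≤ n →
      Filter.Tendsto (fun s : ℕ =>
        (a s * c (n+s) / (a (n+s) * c s)) *
          ((c s / a s) * (a (n-j+s) * (c (n-j) / c (n-j+s)) * b j) /
            (a (n+s) * c (n+s+1) / (a (n+s+1) * c (n+s))) ^ j))
        Filter.atTop (nhds (c (n-j) * b j)) := by
  have hA0 : ∀ m, a m / c m ≠ 0 := fun m => div_ne_zero (ha m) (hc m)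
  have hμ0 : ∀ m : ℕ, a m * c (m+1) / (a (m+1) * c m) ≠ 0 := fun m =>
    div_ne_zero (mul_ne_zero (ha m) (hc (m+1))) (mul_ne_zero (ha (m+1)) (hc m))
  have hAμ : ∀ m : ℕ, a m / c m =
      a (m+1) / c (m+1) * (a m * c (m+1) / (a (m+1) * c m)) := by
    intro m
    have n1 := ha (m+1); have n2 := hc (m+1); have n3 := ha m; have n4 := hc m
    field_simp
  have hratio : Tendsto (fun m : ℕ =>
      (a m * c (m+1) / (a (m+1) * c m)) / (a (m+1) * c (m+2) / (a (m+2) * c (m+1))))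
      atTop (nhds 1) := by
    have h1 : Tendsto (fun m : ℕ => a m * a (m+2) / (a (m+1))^2) atTop (nhds 1) := by
      have := hla.comp (tendsto_add_atTop_nat 1)
      simpa [Function.comp_def] using this
    have h2 : Tendsto (fun m : ℕ => c m * c (m+2) / (c (m+1))^2) atTop (nhds 1) := by
      have := hlc.comp (tendsto_add_atTop_nat 1)
      simpa [Function.comp_def] using this
    have h3 : Tendsto (fun m : ℕ =>
        (a m * a (m+2) / (a (m+1))^2) / (c m * c (m+2) / (c (m+1))^2))
        atTop (nhds (1/1)) := h1.div h2 one_ne_zero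
    rw [show (1:ℝ)/1 = 1 by norm_num] at h3
    have heq : (fun m : ℕ =>
        (a m * a (m+2) / (a (m+1))^2) / (c m * c (m+2) / (c (m+1))^2)) =
        fun m : ℕ =>
        (a m * c (m+1) / (a (m+1) * c m)) / (a (m+1) * c (m+2) / (a (m+2) * c (m+1))) := by
      funext m
      have n1 := ha m; have n2 := ha (m+1); have n3 := ha (m+2)
      have n4 := hc m; have n5 := hc (m+1); have n6 := hc (m+2)
      field_simp
    rw [heq] at h3
    exact h3
  have key := brenke_aux (fun m => a m / c m)
    (fun m => a m * c (m+1) / (a (m+1) * c m)) hA0 hμ0 hAμ hratio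
  intro n j hj
  have hcomp : Tendsto (fun s : ℕ =>
      (a (n-j+s) / c (n-j+s)) /
        ((a (n+s) / c (n+s)) * (a (n+s) * c (n+s+1) / (a (n+s+1) * c (n+s)))^j))
      atTop (nhds 1) := by
    have h := (key j).comp (tendsto_add_atTop_nat (n - j))
    have heq : ((fun m : ℕ => (a m / c m) /
        ((a (m+j) / c (m+j)) * (a (m+j) * c (m+j+1) / (a (m+j+1) * c (m+j)))^j)) ∘
        (fun s => s + (n-j))) = fun s : ℕ =>
        (a (n-j+s) / c (n-j+s)) /
          ((a (n+s) / c (n+s)) * (a (n+s) * c (n+s+1) / (a (n+s+1) * c (n+s)))^j) := by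
      funext s
      have e1 : s + (n-j) = n - j + s := by omega
      have e2 : s + (n-j) + j = n + s := by omega
      have e3 : n - j + s + j = n + s := by omega
      simp only [Function.comp_apply, e1, e2, e3]
    rw [heq] at h
    exact h
  have h := hcomp.const_mul (c (n-j) * b j)
  rw [mul_one] at h
  have heq : (fun s : ℕ => c (n-j) * b j *
      ((a (n-j+s) / c (n-j+s)) /
        ((a (n+s) / c (n+s)) * (a (n+s) * c (n+s+1) / (a (n+s+1) * c (n+s)))^j)))
      = fun s : ℕ =>
        (a s * c (n+s) / (a (n+s) * c s)) *
          ((c s / a s) * (a (n-j+s) * (c (n-j) / c (n-j+s)) * b j) /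
            (a (n+s) * c (n+s+1) / (a (n+s+1) * c (n+s))) ^ j) := by
    funext s
    have n1 := ha s; have n2 := hc s; have n3 := ha (n+s); have n4 := hc (n+s)
    have n5 := ha (n-j+s); have n6 := hc (n-j+s)
    have n7 := ha (n+s+1); have n8 := hc (n+s+1)
    have n9 := hc (n-j)
    field_simp
  rw [heq] at h
  exact h
end
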